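/- arXiv:1611.10101 — 7 statements merged into one kernel-verified Lean document; each statement's English description precedes it below -/
import Mathlib

section
/- Let d ≥ 3 and let f be a nonzero homogeneous polynomial of degree d in k[x_1,...,x_n]. If f contains (with nonzero coefficient) at most n-1 of the n² singularity-checking monomials x_i x_j^{d-1} (i,j ∈ [1,n]), then the projective hypersurface V(f) is singular at (e_ℓ) for some ℓ ∈ [1,n]. -/
open MvPolynomial

/-- If a nonzero homogeneous polynomial `f` of degree `d ≥ 3` in `n` variables
contains (with nonzero coefficient) at most `n - 1` of the `n²` singularity-checking
monomials `x_i x_j^(d-1)`, then the projective hypersurface `V(f)` is singular at some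
standard coordinate point `(e_ℓ)`. -/
theorem stmt_4 {k : Type*} [Field k] [IsAlgClosed k] [CharZero k] {n d : ℕ} (hd : 3 ≤ d)
    (f : MvPolynomial (Fin n) k) (hf : f ≠ 0) (hhom : f.IsHomogeneous d)
    (h : {ij : Fin n × Fin n |
        coeff (Finsupp.single ij.2 (d - 1) + Finsupp.single ij.1 1) f ≠ 0}.ncard ≤ n - 1) :
    ∃ l : Fin n, ∀ i : Fin n, eval (Pi.single l (1 : k)) (pderiv i f) = 0 := by
  rcases Nat.eq_zero_or_pos n with hn | hn
  · exfalso
    haveI : IsEmpty (Fin n) := by rw [hn]; infer_instance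
    obtain ⟨c, rfl⟩ := MvPolynomial.C_surjective (Fin n) f
    have := hhom.totalDegree hf
    simp [totalDegree_C] at this
    omega
  by_contra hcon
  push_neg at hcon
  -- key: if the coefficient vanishes, so does the evaluated partial derivative
  have key : ∀ l i : Fin n, eval (Pi.single l (1 : k)) (pderiv i f) ≠ 0 →
      coeff (Finsupp.single l (d - 1) + Finsupp.single i 1) f ≠ 0 := by
    intro l i hne hc
    apply hne
    conv_lhs => rw [f.as_sum]
    rw [map_sum, map_sum]
    apply Finset.sum_eq_zero
    intro m hm
    rw [pderiv_monomial, eval_monomial]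
    by_cases hmm : m = Finsupp.single l (d - 1) + Finsupp.single i 1
    · rw [hmm, hc]
      simp
    · by_cases hmi : m i = 0
      · simp [hmi]
      · by_cases hsupp : ∀ x ∈ (m - Finsupp.single i 1).support, x = l
        · exfalso
          apply hmm
          have hle : Finsupp.single i 1 ≤ m :=
            Finsupp.single_le_iff.mpr (Nat.one_le_iff_ne_zero.mpr hmi)
          obtain ⟨t, hms⟩ : ∃ t, m - Finsupp.single i 1 = Finsupp.single l t :=
            Finsupp.support_subset_singleton'.mp
              (by intro x hx; rw [Finset.mem_singleton]; exact hsupp x hx)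
          have hm' : m = Finsupp.single l t + Finsupp.single i 1 := by
            rw [← hms, tsub_add_cancel_of_le hle]
          have hdeg : m.degree = d := by
            by_contra hne'
            exact (mem_support_iff.mp hm) (hhom.coeff_eq_zero hne')
          have hdsum : (Finsupp.single l t + Finsupp.single i 1).degree = t + 1 := by
            show ((Finsupp.single l t + Finsupp.single i 1).sum fun _ e => e) = t + 1
            rw [Finsupp.sum_add_index' (by simp) (fun _ _ _ => rfl),
              Finsupp.sum_single_index rfl, Finsupp.sum_single_index rfl]
          rw [hm'] at hdeg
          rw [hdsum] at hdeg
          have : t = d - 1 := by omega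
          rw [hm', this]
        · push_neg at hsupp
          obtain ⟨x, hx, hxl⟩ := hsupp
          rw [Finsupp.prod]
          rw [Finset.prod_eq_zero hx]
          · ring
          · rw [Pi.single_eq_of_ne hxl]
            exact zero_pow (Finsupp.mem_support_iff.mp hx)
  -- counting argument
  set S : Set (Fin n × Fin n) := {ij : Fin n × Fin n |
      coeff (Finsupp.single ij.2 (d - 1) + Finsupp.single ij.1 1) f ≠ 0} with hS
  have hmem : ∀ l : Fin n, ∃ i : Fin n, (i, l) ∈ S := by
    intro l
    obtain ⟨i, hi⟩ := hcon l
    exact ⟨i, key l i hi⟩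
  choose g hg using hmem
  classical
  have hcard : (Finset.univ : Finset (Fin n)).card ≤ S.toFinset.card := by
    apply Finset.card_le_card_of_injOn (fun l => (g l, l))
    · intro l _
      simp only [Finset.mem_coe, Set.mem_toFinset]
      exact hg l
    · intro a _ b _ hab
      exact congrArg Prod.snd hab
  rw [← Set.ncard_eq_toFinset_card'] at hcard
  simp at hcard
  omega
end

section
/- The quartic form f^{μ,0,0} = x³y + y³z + z³t + t³x + μ x²z² over an algebraically closed field k of characteristic zero defines a singular projective surface in P³(k) if and only if μ⁴ = 4⁴/3⁶. -/
/-!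
At a singular point `(a, b, c, d)` of `f^{μ,0,0}` one has `a ≠ 0` and `b ≠ 0`. The equation
`∂f/∂y = 0` gives `c = -a³/(3b²)`, and then `∂f/∂t = 0` gives `81 b⁶ d² = a⁸`. Substituting into
`∂f/∂x = 0` and `∂f/∂z = 0`, their difference forces `12 b⁵ = -μ a⁵`, after which `∂f/∂z = 0`,
squared to eliminate `d`, becomes `(729 μ⁴ - 256) a²⁰ = 0`. Conversely, these relations can be
solved backwards from a fifth root `y` of `-μ/12`.
-/

open MvPolynomial

/-- A quartic form in `k[x,y,z,t]` is singular if its four partial derivatives have a common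
zero in `k⁴ \ {0}`, i.e. the projective surface `V(f) ⊆ ℙ³(k)` has a singular point. -/
def MvPolynomial.IsSingularForm {k : Type*} [CommRing k] (f : MvPolynomial (Fin 4) k) : Prop :=
  ∃ p : Fin 4 → k, p ≠ 0 ∧ ∀ i : Fin 4, eval p (pderiv i f) = 0

section CommRing

variable {k : Type*} [CommRing k]

noncomputable def quarticForm (μ : k) : MvPolynomial (Fin 4) k :=
  X 0 ^ 3 * X 1 + X 1 ^ 3 * X 2 + X 2 ^ 3 * X 3 + X 3 ^ 3 * X 0 + C μ * X 0 ^ 2 * X 2 ^ 2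

structure IsCriticalPoint (μ a b c d : k) : Prop where
  dx : 3 * a ^ 2 * b + d ^ 3 + 2 * μ * a * c ^ 2 = 0
  dy : a ^ 3 + 3 * b ^ 2 * c = 0
  dz : b ^ 3 + 3 * c ^ 2 * d + 2 * μ * a ^ 2 * c = 0
  dt : c ^ 3 + 3 * a * d ^ 2 = 0

theorem eval_pderiv_quarticForm_eq_zero_iff (μ : k) (p : Fin 4 → k) :
    (∀ i, eval p (pderiv i (quarticForm μ)) = 0) ↔
      IsCriticalPoint μ (p 0) (p 1) (p 2) (p 3) := by
  have dx : eval p (pderiv 0 (quarticForm μ)) =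
      3 * p 0 ^ 2 * p 1 + p 3 ^ 3 + 2 * μ * p 0 * p 2 ^ 2 := by
    simp [quarticForm]; ring
  have dy : eval p (pderiv 1 (quarticForm μ)) = p 0 ^ 3 + 3 * p 1 ^ 2 * p 2 := by
    simp [quarticForm]; ring
  have dz : eval p (pderiv 2 (quarticForm μ)) =
      p 1 ^ 3 + 3 * p 2 ^ 2 * p 3 + 2 * μ * p 0 ^ 2 * p 2 := by
    simp [quarticForm]; ring
  have dt : eval p (pderiv 3 (quarticForm μ)) = p 2 ^ 3 + 3 * p 0 * p 3 ^ 2 := by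
    simp [quarticForm]; ring
  refine ⟨fun h => ⟨dx ▸ h 0, dy ▸ h 1, dz ▸ h 2, dt ▸ h 3⟩, fun h i => ?_⟩
  fin_cases i
  exacts [dx ▸ h.dx, dy ▸ h.dy, dz ▸ h.dz, dt ▸ h.dt]

theorem isSingularForm_quarticForm_iff (μ : k) :
    (quarticForm μ).IsSingularForm ↔
      ∃ p : Fin 4 → k, p ≠ 0 ∧ IsCriticalPoint μ (p 0) (p 1) (p 2) (p 3) := by
  simp only [IsSingularForm, eval_pderiv_quarticForm_eq_zero_iff]

end CommRing

namespace IsCriticalPoint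

variable {k : Type*} [Field k] {μ a b c d : k}

theorem eq_zero_of_fst_eq_zero (h : IsCriticalPoint μ a b c d) (ha : a = 0) :
    b = 0 ∧ c = 0 ∧ d = 0 := by
  subst ha
  have hc : c = 0 := pow_eq_zero_iff three_ne_zero |>.mp (by linear_combination h.dt)
  subst hc
  exact ⟨pow_eq_zero_iff three_ne_zero |>.mp (by linear_combination h.dz), rfl,
    pow_eq_zero_iff three_ne_zero |>.mp (by linear_combination h.dx)⟩

theorem snd_ne_zero (h : IsCriticalPoint μ a b c d) (ha : a ≠ 0) : b ≠ 0 := by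
  rintro rfl
  exact ha (pow_eq_zero_iff three_ne_zero |>.mp (by linear_combination h.dy))

theorem dt_elim_third (h : IsCriticalPoint μ a b c d) (ha : a ≠ 0) :
    81 * b ^ 6 * d ^ 2 = a ^ 8 := by
  have h' : a * (81 * b ^ 6 * d ^ 2 - a ^ 8) = 0 := by
    linear_combination 27 * b ^ 6 * h.dt -
      ((a ^ 3 + 3 * b ^ 2 * c) ^ 2 - 9 * b ^ 2 * c * (a ^ 3 + 3 * b ^ 2 * c) +
        27 * b ^ 4 * c ^ 2) * h.dy
  linear_combination (mul_eq_zero.mp h').resolve_left ha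

theorem dz_elim_third (h : IsCriticalPoint μ a b c d) :
    9 * a ^ 6 * b ^ 3 * d = 18 * μ * a ^ 5 * b ^ 5 - 27 * b ^ 10 := by
  linear_combination 27 * b ^ 7 * h.dz - 9 * b ^ 3 * d * (3 * b ^ 2 * c - a ^ 3) * h.dy -
    18 * μ * a ^ 2 * b ^ 5 * h.dy

theorem dx_elim_third (h : IsCriticalPoint μ a b c d) (ha : a ≠ 0) :
    9 * a ^ 6 * b ^ 3 * d = -162 * μ * a ^ 5 * b ^ 5 - 2187 * b ^ 10 := by
  have h' : a ^ 2 * (9 * a ^ 6 * b ^ 3 * d + 162 * μ * a ^ 5 * b ^ 5 + 2187 * b ^ 10) = 0 := by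
    linear_combination 729 * b ^ 9 * h.dx - 9 * b ^ 3 * d * h.dt_elim_third ha -
      162 * μ * a * b ^ 5 * (3 * b ^ 2 * c - a ^ 3) * h.dy
  linear_combination (mul_eq_zero.mp h').resolve_left (pow_ne_zero 2 ha)

variable [CharZero k]

theorem twelve_mul_snd_pow_five (h : IsCriticalPoint μ a b c d) (ha : a ≠ 0) :
    12 * b ^ 5 = -(μ * a ^ 5) := by
  have h' : b ^ 5 * (180 * (12 * b ^ 5 + μ * a ^ 5)) = 0 := by
    linear_combination h.dx_elim_third ha - h.dz_elim_third
  have := (mul_eq_zero.mp h').resolve_left (pow_ne_zero 5 (h.snd_ne_zero ha))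
  linear_combination (mul_eq_zero.mp this).resolve_left (by norm_num)

theorem coeff_pow_four_eq (h : IsCriticalPoint μ a b c d) (ha : a ≠ 0) : 729 * μ ^ 4 = 256 := by
  have hb := h.twelve_mul_snd_pow_five ha
  have h20 : a ^ 20 = (27 * b ^ 10 - 18 * μ * a ^ 5 * b ^ 5) ^ 2 := by
    linear_combination
      (9 * a ^ 6 * b ^ 3 * d - 27 * b ^ 10 + 18 * μ * a ^ 5 * b ^ 5) * h.dz_elim_third -
        a ^ 12 * h.dt_elim_third ha
  have key : (729 * μ ^ 4 - 256) * a ^ 20 = 0 := by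
    linear_combination (-256 : k) * h20 +
      (-15552 * b ^ 15 + 22032 * μ * a ^ 5 * b ^ 10 - 8748 * μ ^ 2 * a ^ 10 * b ^ 5 +
        729 * μ ^ 3 * a ^ 15) * hb
  linear_combination (mul_eq_zero.mp key).resolve_right (pow_ne_zero 20 ha)

end IsCriticalPoint

section Field

variable {k : Type*} [Field k] [CharZero k] {μ : k}

-- The relations `3b²c = -a³`, `12b⁵ = -μa⁵`, `81b⁶d² = a⁸` of a critical point, solved with `a = 9y³`.
theorem isCriticalPoint_of_pow_five {y s : k} (hy : 12 * y ^ 5 = -μ) (hs : 16 * s = -27 * μ ^ 2)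
    (hs2 : s ^ 2 = 1) : IsCriticalPoint μ (9 * y ^ 3) (9 * y ^ 4) (-3 * y) s where
  dx := by
    linear_combination (2187 / 144 * (12 * y ^ 5 - μ) + 162 * μ / 12) * hy + s * hs2 +
      (1 / 16 : k) * hs
  dy := by ring
  dz := by
    linear_combination (729 / 144 * (12 * y ^ 5 - μ) * y ^ 2 - 486 / 12 * μ * y ^ 2) * hy +
      27 / 16 * y ^ 2 * hs
  dt := by linear_combination 27 * y ^ 3 * hs2

theorem exists_isCriticalPoint [IsAlgClosed k] (hμ : 729 * μ ^ 4 = 256) :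
    ∃ a b c d : k, a ≠ 0 ∧ IsCriticalPoint μ a b c d := by
  obtain ⟨y, hy⟩ := IsAlgClosed.exists_pow_nat_eq (-μ / 12) (n := 5) (by norm_num)
  have hy' : 12 * y ^ 5 = -μ := by rw [hy]; ring
  have hy0 : y ≠ 0 := by
    rintro rfl
    have hμ0 : μ = 0 := by linear_combination hy'
    norm_num [hμ0] at hμ
  exact ⟨_, _, _, _, mul_ne_zero (by norm_num) (pow_ne_zero 3 hy0),
    isCriticalPoint_of_pow_five hy' (s := -(27 / 16) * μ ^ 2) (by ring)
      (by linear_combination (1 / 256 : k) * hμ)⟩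

theorem isSingularForm_quarticForm_iff_of_isAlgClosed [IsAlgClosed k] :
    (quarticForm μ).IsSingularForm ↔ 729 * μ ^ 4 = 256 := by
  rw [isSingularForm_quarticForm_iff]
  constructor
  · rintro ⟨p, hp, h⟩
    have ha : p 0 ≠ 0 := fun ha => hp <| by
      obtain ⟨hb, hc, hd⟩ := h.eq_zero_of_fst_eq_zero ha
      ext i; fin_cases i <;> assumption
    exact h.coeff_pow_four_eq ha
  · intro hμ
    obtain ⟨a, b, c, d, ha, h⟩ := exists_isCriticalPoint hμ
    exact ⟨![a, b, c, d], fun h0 => ha (congrFun h0 0), h⟩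

end Field

/-- the quartic form `f^{μ,0,0} = x³y + y³z + z³t + t³x + μx²z²` is singular
iff `μ⁴ = 4⁴/3⁶`. -/
theorem stmt_7 {k : Type*} [Field k] [IsAlgClosed k] [CharZero k] (μ : k) :
    (X 0 ^ 3 * X 1 + X 1 ^ 3 * X 2 + X 2 ^ 3 * X 3 + X 3 ^ 3 * X 0 +
        C μ * X 0 ^ 2 * X 2 ^ 2 : MvPolynomial (Fin 4) k).IsSingularForm ↔
      μ ^ 4 = 4 ^ 4 / 3 ^ 6 := by
  refine isSingularForm_quarticForm_iff_of_isAlgClosed.trans ?_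
  rw [eq_div_iff (by norm_num)]
  constructor <;> intro h <;> linear_combination h
end

section
/- The quartic form f^{0,0,λ} = x³y + y³z + z³t + t³x + λ xyzt over an algebraically closed field k of characteristic zero is singular if and only if λ⁴ = 4⁴ = 256. -/
/-!
The partial derivatives of `f = x³y + y³z + z³t + t³x + λxyzt` are permuted by the cyclic
symmetry `x → y → z → t → x`. At a singular point one vanishing coordinate forces the next one
to vanish, so all coordinates are nonzero; a linear combination of the four equations gives
`4x³y = -λxyzt`, and cyclically, and multiplying the four relations yields
`256 (xyzt)⁴ = λ⁴ (xyzt)⁴`. Conversely, for `μ = -λ/4` with `μ⁴ = 1` the point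
`(1 : μ³ : μ² : μ)` is singular.
-/

open MvPolynomial

section CommRing

variable {k : Type*} [CommRing k]

noncomputable def cyclicQuartic (l : k) : MvPolynomial (Fin 4) k :=
  X 0 ^ 3 * X 1 + X 1 ^ 3 * X 2 + X 2 ^ 3 * X 3 + X 3 ^ 3 * X 0 + C l * (X 0 * X 1 * X 2 * X 3)

def IsCriticalPointCyclicQuartic (l a b c d : k) : Prop :=
  3 * a ^ 2 * b + d ^ 3 + l * (b * c * d) = 0 ∧
  a ^ 3 + 3 * b ^ 2 * c + l * (a * c * d) = 0 ∧
  b ^ 3 + 3 * c ^ 2 * d + l * (a * b * d) = 0 ∧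
  c ^ 3 + 3 * d ^ 2 * a + l * (a * b * c) = 0

theorem forall_eval_pderiv_cyclicQuartic_eq_zero_iff (l : k) (p : Fin 4 → k) :
    (∀ i, eval p (pderiv i (cyclicQuartic l)) = 0) ↔
      IsCriticalPointCyclicQuartic l (p 0) (p 1) (p 2) (p 3) := by
  simp [Fin.forall_fin_succ, cyclicQuartic, IsCriticalPointCyclicQuartic, pderiv_X, Pi.single_apply,
    mul_assoc, mul_comm, mul_left_comm]

theorem isSingularForm_cyclicQuartic_iff (l : k) :
    (cyclicQuartic l).IsSingularForm ↔
      ∃ a b c d : k,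
        ¬(a = 0 ∧ b = 0 ∧ c = 0 ∧ d = 0) ∧ IsCriticalPointCyclicQuartic l a b c d := by
  simp only [IsSingularForm, forall_eval_pderiv_cyclicQuartic_eq_zero_iff]
  constructor
  · rintro ⟨p, hp, h⟩
    refine ⟨p 0, p 1, p 2, p 3, fun h0 => hp ?_, h⟩
    ext i
    fin_cases i <;> simp [h0]
  · rintro ⟨a, b, c, d, hne, h⟩
    refine ⟨![a, b, c, d], fun h0 => hne ?_, h⟩
    simpa [funext_iff, Fin.forall_fin_succ] using h0

variable {l a b c d : k}

theorem IsCriticalPointCyclicQuartic.rotate (h : IsCriticalPointCyclicQuartic l a b c d) :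
    IsCriticalPointCyclicQuartic l b c d a := by
  obtain ⟨h0, h1, h2, h3⟩ := h
  exact ⟨by linear_combination h1, by linear_combination h2, by linear_combination h3,
    by linear_combination h0⟩

theorem isCriticalPointCyclicQuartic_of_pow_four_eq_one {μ : k} (hμ : μ ^ 4 = 1) :
    IsCriticalPointCyclicQuartic (-4 * μ) 1 (μ ^ 3) (μ ^ 2) μ :=
  ⟨by linear_combination (-4 * μ ^ 3) * hμ, by linear_combination (3 * μ ^ 4 - 1) * hμ,
    by linear_combination μ ^ 5 * hμ, by linear_combination (-3 * μ ^ 2) * hμ⟩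

theorem IsCriticalPointCyclicQuartic.second_eq_zero_of_first_eq_zero [NoZeroDivisors k]
    (h : IsCriticalPointCyclicQuartic l a b c d) (ha : a = 0) : b = 0 := by
  obtain ⟨-, -, h2, h3⟩ := h
  have hc : c = 0 :=
    pow_eq_zero_iff three_ne_zero |>.mp (by linear_combination h3 - (3 * d ^ 2 + l * b * c) * ha)
  exact pow_eq_zero_iff three_ne_zero |>.mp
    (by linear_combination h2 - (3 * c * d) * hc - (l * b * d) * ha)

theorem IsCriticalPointCyclicQuartic.first_ne_zero [NoZeroDivisors k]
    (h : IsCriticalPointCyclicQuartic l a b c d) (hne : ¬(a = 0 ∧ b = 0 ∧ c = 0 ∧ d = 0)) :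
    a ≠ 0 := fun ha =>
  have hb := h.second_eq_zero_of_first_eq_zero ha
  have hc := h.rotate.second_eq_zero_of_first_eq_zero hb
  hne ⟨ha, hb, hc, h.rotate.rotate.second_eq_zero_of_first_eq_zero hc⟩

end CommRing

section Field

variable {k : Type*} [Field k] [CharZero k] {l a b c d : k}

theorem IsCriticalPointCyclicQuartic.four_mul_pow_three_mul
    (h : IsCriticalPointCyclicQuartic l a b c d) : 4 * (a ^ 3 * b) = -(l * (a * b * c * d)) := by
  obtain ⟨h0, h1, h2, h3⟩ := h
  linear_combination (27 / 20 * a) * h0 - (1 / 20 * b) * h1 + (3 / 20 * c) * h2 - (9 / 20 * d) * h3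

theorem IsCriticalPointCyclicQuartic.pow_four_eq (h : IsCriticalPointCyclicQuartic l a b c d)
    (hne : ¬(a = 0 ∧ b = 0 ∧ c = 0 ∧ d = 0)) : l ^ 4 = 256 := by
  have hP : a * b * c * d ≠ 0 := by
    have ha := h.first_ne_zero hne
    have hb := h.rotate.first_ne_zero fun ⟨hb, hc, hd, ha⟩ => hne ⟨ha, hb, hc, hd⟩
    have hc := h.rotate.rotate.first_ne_zero fun ⟨hc, hd, ha, hb⟩ => hne ⟨ha, hb, hc, hd⟩
    have hd :=
      h.rotate.rotate.rotate.first_ne_zero fun ⟨hd, ha, hb, hc⟩ => hne ⟨ha, hb, hc, hd⟩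
    positivity
  set P := a * b * c * d
  have e₀ : 4 * (a ^ 3 * b) = -(l * P) := h.four_mul_pow_three_mul
  have e₁ : 4 * (b ^ 3 * c) = -(l * P) := by linear_combination h.rotate.four_mul_pow_three_mul
  have e₂ : 4 * (c ^ 3 * d) = -(l * P) := by
    linear_combination h.rotate.rotate.four_mul_pow_three_mul
  have e₃ : 4 * (d ^ 3 * a) = -(l * P) := by
    linear_combination h.rotate.rotate.rotate.four_mul_pow_three_mul
  refine mul_right_cancel₀ (pow_ne_zero 4 hP) ?_
  calc l ^ 4 * P ^ 4 = (-(l * P)) * (-(l * P)) * (-(l * P)) * (-(l * P)) := by ring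
    _ = (4 * (a ^ 3 * b)) * (4 * (b ^ 3 * c)) * (4 * (c ^ 3 * d)) * (4 * (d ^ 3 * a)) := by
      rw [e₀, e₁, e₂, e₃]
    _ = 256 * P ^ 4 := by ring

end Field

theorem stmt_8_general {k : Type*} [Field k] [CharZero k] (l : k) :
    (X 0 ^ 3 * X 1 + X 1 ^ 3 * X 2 + X 2 ^ 3 * X 3 + X 3 ^ 3 * X 0 +
        C l * (X 0 * X 1 * X 2 * X 3) : MvPolynomial (Fin 4) k).IsSingularForm ↔
      l ^ 4 = 256 := by
  refine (isSingularForm_cyclicQuartic_iff l).trans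
    ⟨fun ⟨a, b, c, d, hne, h⟩ => h.pow_four_eq hne, fun hl => ?_⟩
  set μ := -l / 4
  have hμ : μ ^ 4 = 1 := by linear_combination hl / 256
  have hlμ : l = -4 * μ := by ring
  exact ⟨1, μ ^ 3, μ ^ 2, μ, one_ne_zero ∘ And.left,
    hlμ ▸ isCriticalPointCyclicQuartic_of_pow_four_eq_one hμ⟩

/-- the quartic form `f^{0,0,λ} = x³y + y³z + z³t + t³x + λxyzt` is singular
iff `λ⁴ = 4⁴ = 256`. -/
theorem stmt_8 {k : Type*} [Field k] [IsAlgClosed k] [CharZero k] (l : k) :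
    (X 0 ^ 3 * X 1 + X 1 ^ 3 * X 2 + X 2 ^ 3 * X 3 + X 3 ^ 3 * X 0 +
        C l * (X 0 * X 1 * X 2 * X 3) : MvPolynomial (Fin 4) k).IsSingularForm ↔
      l ^ 4 = 256 :=
  stmt_8_general l
end

section
/- The quartic form f^{μ,0,λ} = x³y + y³z + z³t + t³x + μ x²z² + λ xyzt over an algebraically closed field k of characteristic zero is singular if and only if (16 - 18μλ)² = (27μ² - λ² + μλ³)². -/
open MvPolynomial

set_option maxHeartbeats 1000000 in
private lemma stmt9_aux {k : Type*} [Field k] (μ l : k) (q : Fin 4 → k) (hq0 : q ≠ 0)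
    (e0 : eval q (pderiv (0 : Fin 4) (X 0 ^ 3 * X 1 + X 1 ^ 3 * X 2 + X 2 ^ 3 * X 3 + X 3 ^ 3 * X 0 +
        C μ * X 0 ^ 2 * X 2 ^ 2 + C l * (X 0 * X 1 * X 2 * X 3) : MvPolynomial (Fin 4) k)) = 0)
    (e1 : eval q (pderiv (1 : Fin 4) (X 0 ^ 3 * X 1 + X 1 ^ 3 * X 2 + X 2 ^ 3 * X 3 + X 3 ^ 3 * X 0 +
        C μ * X 0 ^ 2 * X 2 ^ 2 + C l * (X 0 * X 1 * X 2 * X 3) : MvPolynomial (Fin 4) k)) = 0)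
    (e2 : eval q (pderiv (2 : Fin 4) (X 0 ^ 3 * X 1 + X 1 ^ 3 * X 2 + X 2 ^ 3 * X 3 + X 3 ^ 3 * X 0 +
        C μ * X 0 ^ 2 * X 2 ^ 2 + C l * (X 0 * X 1 * X 2 * X 3) : MvPolynomial (Fin 4) k)) = 0)
    (e3 : eval q (pderiv (3 : Fin 4) (X 0 ^ 3 * X 1 + X 1 ^ 3 * X 2 + X 2 ^ 3 * X 3 + X 3 ^ 3 * X 0 +
        C μ * X 0 ^ 2 * X 2 ^ 2 + C l * (X 0 * X 1 * X 2 * X 3) : MvPolynomial (Fin 4) k)) = 0) :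
    (X 0 ^ 3 * X 1 + X 1 ^ 3 * X 2 + X 2 ^ 3 * X 3 + X 3 ^ 3 * X 0 +
        C μ * X 0 ^ 2 * X 2 ^ 2 +
        C l * (X 0 * X 1 * X 2 * X 3) : MvPolynomial (Fin 4) k).IsSingularForm := by
  refine ⟨q, hq0, fun i => ?_⟩
  fin_cases i
  · exact e0
  · exact e1
  · exact e2
  · exact e3


set_option maxHeartbeats 2000000 in
/-- the quartic form `f^{μ,0,λ} = x³y + y³z + z³t + t³x + μx²z² + λxyzt` is
singular iff `(16 - 18μλ)² = (27μ² - λ² + μλ³)²`. -/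
theorem stmt_9 {k : Type*} [Field k] [IsAlgClosed k] [CharZero k] (μ l : k) :
    (X 0 ^ 3 * X 1 + X 1 ^ 3 * X 2 + X 2 ^ 3 * X 3 + X 3 ^ 3 * X 0 +
        C μ * X 0 ^ 2 * X 2 ^ 2 +
        C l * (X 0 * X 1 * X 2 * X 3) : MvPolynomial (Fin 4) k).IsSingularForm ↔
      (16 - 18 * μ * l) ^ 2 = (27 * μ ^ 2 - l ^ 2 + μ * l ^ 3) ^ 2 := by
  constructor
  · rintro ⟨p, hp, h⟩
    have h0 := h 0
    have h1 := h 1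
    have h2 := h 2
    have h3 := h 3
    simp [pderiv_mul, pderiv_pow, pderiv_X, pderiv_C, Pi.single_apply] at h0 h1 h2 h3
    set x := p 0 with hxd
    set y := p 1 with hyd
    set z := p 2 with hzd
    set t := p 3 with htd
    have h30 : (3 : ℕ) ≠ 0 := by norm_num
    have h20 : (2 : ℕ) ≠ 0 := by norm_num
    have hx : x ≠ 0 := by
      intro hx0
      apply hp
      have hz0 : z = 0 := by
        refine pow_eq_zero_iff h30 |>.mp ?_
        rw [hx0] at h3; linear_combination h3
      have hy0 : y = 0 := by
        refine pow_eq_zero_iff h30 |>.mp ?_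
        rw [hx0, hz0] at h2; linear_combination h2
      have ht0 : t = 0 := by
        refine pow_eq_zero_iff h30 |>.mp ?_
        rw [hx0, hy0, hz0] at h0; linear_combination h0
      funext i
      fin_cases i <;> simpa using ‹_›
    have hz : z ≠ 0 := by
      intro hz0
      have ht0 : t = 0 := by
        refine pow_eq_zero_iff h20 |>.mp ?_
        have e : x * (3 * t ^ 2) = 0 := by rw [hz0] at h3; linear_combination h3
        have := (mul_eq_zero.mp e).resolve_left hx
        linear_combination (1/3 : k) * this
      have hy0 : y = 0 := by
        have e : y * (3 * x ^ 2) = 0 := by rw [hz0, ht0] at h0; linear_combination h0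
        rcases mul_eq_zero.mp e with h | h
        · exact h
        · exact absurd (pow_eq_zero_iff h20 |>.mp (by linear_combination (1/3:k) * h)) hx
      apply hx
      refine pow_eq_zero_iff h30 |>.mp ?_
      rw [hy0, hz0] at h1; linear_combination h1
    have ht : t ≠ 0 := by
      intro ht0
      have hy : y ≠ 0 := by
        intro hy0
        apply hx
        refine pow_eq_zero_iff h30 |>.mp ?_
        rw [hy0, ht0] at h1; linear_combination h1
      have e : y * (y ^ 2 * z) = y * (3 * x ^ 3) := by
        rw [ht0] at h0 h2
        linear_combination z * h2 - x * h0
      have e2 : y ^ 2 * z = 3 * x ^ 3 := mul_left_cancel₀ hy e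
      apply hx
      refine pow_eq_zero_iff h30 |>.mp ?_
      rw [ht0] at h1
      linear_combination (1/10 : k) * h1 - (3/10 : k) * e2
    have hA : x ^ 3 * y = z ^ 3 * t := by
      linear_combination (3/10 : k) * x * h0 + (1/10 : k) * y * h1 - (3/10 : k) * z * h2 - (1/10 : k) * t * h3
    have hB : y ^ 3 * z = x * t ^ 3 := by
      linear_combination (-1/10 : k) * x * h0 + (3/10 : k) * y * h1 + (1/10 : k) * z * h2 - (3/10 : k) * t * h3
    have hS3 : z ^ 10 * t ^ 3 = x ^ 10 * t ^ 3 := by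
      linear_combination x ^ 9 * hB - z * (x ^ 6 * y ^ 2 + x ^ 3 * y * z ^ 3 * t + z ^ 6 * t ^ 2) * hA
    have hS : z ^ 10 = x ^ 10 := mul_right_cancel₀ (pow_ne_zero 3 ht) hS3
    have hG1 : μ * (x ^ 2 * z ^ 2) = t ^ 3 * x - z ^ 3 * t := by
      linear_combination (x/2) * h0 - (y/2) * h1 - hA + (3/2 : k) * hB
    have hG2 : l * (x ^ 7 * z * t) = -(x ^ 9) - 3 * z ^ 7 * t ^ 2 := by
      linear_combination x ^ 6 * h1 - 3 * z * (x ^ 3 * y + z ^ 3 * t) * hA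
    have key : x ^ 16 * z ^ 12 * t ^ 6 *
        ((16 - 18 * μ * l) ^ 2 - (27 * μ ^ 2 - l ^ 2 + μ * l ^ 3) ^ 2) = 0 := by
      linear_combination ((-729)*z^4*t^15*x^11 + 2187*z^7*t^13*x^10 + (-2187)*z^10*t^11*x^9 + 729*z^13*t^9*x^8 + (-576)*l*z^10*t^6*x^14 + 378*l^2*z^8*t^9*x^13 + (-378)*l^2*z^11*t^7*x^12 + (-54)*l^3*z^6*t^12*x^12 + 108*l^3*z^9*t^10*x^11 + (-54)*l^3*z^12*t^8*x^10 + 2*l^5*z^10*t^6*x^14 + (-1)*l^6*z^8*t^9*x^13 + l^6*z^11*t^7*x^12 + (-729)*μ*z^6*t^12*x^12 + 1458*μ*z^9*t^10*x^11 + (-729)*μ*z^12*t^8*x^10 + 378*μ*l^2*z^10*t^6*x^14 + (-54)*μ*l^3*z^8*t^9*x^13 + 54*μ*l^3*z^11*t^7*x^12 + (-1)*μ*l^6*z^10*t^6*x^14 + (-729)*μ^2*z^8*t^9*x^13 + 729*μ^2*z^11*t^7*x^12 + (-54)*μ^2*l^3*z^10*t^6*x^14 + (-729)*μ^3*z^10*t^6*x^14)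 * hG1 + ((-81)*t^14*x^11 + (-5)*z^2*t^6*x^17 + 378*z^3*t^12*x^10 + 3*z^5*t^4*x^16 + 1575*z^6*t^10*x^9 + (-243)*z^7*t^16*x^2 + (-768)*z^9*t^8*x^8 + 1134*z^10*t^14*x + 261*z^12*t^6*x^7 + (-2187)*z^13*t^12 + (-3)*z^15*t^4*x^6 + 81*l*z*t^15*x^9 + 5*l*z^3*t^7*x^15 + (-378)*l*z^4*t^13*x^8 + (-3)*l*z^6*t^5*x^14 + 729*l*z^7*t^11*x^7 + (-768)*l*z^10*t^9*x^6 + 315*l*z^13*t^7*x^5 + 3*l*z^16*t^5*x^4 + (-5)*l^2*z^4*t^8*x^13 + (-27)*l^2*z^5*t^14*x^6 + 3*l^2*z^7*t^6*x^12 + 135*l^2*z^8*t^12*x^5 + (-162)*l^2*z^11*t^10*x^4 + 63*l^2*z^14*t^8*x^3 + (-3)*l^2*z^17*t^6*x^2 + 5*l^3*z^5*t^9*x^11 + (-3)*l^3*z^8*t^7*x^10 + (-9)*l^3*z^9*t^13*x^3 + 12*l^3*z^12*t^11*x^2 + (-9)*l^3*z^15*t^9*x + 3*l^3*z^18*t^7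 + (-5)*l^4*z^6*t^10*x^9 + 3*l^4*z^9*t^8*x^8 + (-1)*l^4*z^12*t^6*x^7 + 3*l^4*z^13*t^12 + (-1)*l^5*z^7*t^11*x^7 + 2*l^5*z^10*t^9*x^6 + (-1)*l^5*z^13*t^7*x^5) * hG2 + ((-81)*t^14*x^10 + (-5)*z^2*t^6*x^16 + 378*z^3*t^12*x^9 + 729*z^4*t^18*x^2 + 3*z^5*t^4*x^15 + 1575*z^6*t^10*x^8 + (-3402)*z^7*t^16*x + (-783)*z^9*t^8*x^7 + 6561*z^10*t^14 + 9*z^12*t^6*x^6 + 2304*l*z^7*t^11*x^6 + (-945)*l*z^10*t^9*x^5 + (-9)*l*z^13*t^7*x^4 + 81*l^2*z^2*t^16*x^6 + (-405)*l^2*z^5*t^14*x^5 + 486*l^2*z^8*t^12*x^4 + (-189)*l^2*z^11*t^10*x^3 + 9*l^2*z^14*t^8*x^2 + 27*l^3*z^6*t^15*x^3 + (-36)*l^3*z^9*t^13*x^2 + 27*l^3*z^12*t^11*x + (-9)*l^3*z^15*t^9 + (-9)*l^4*z^10*t^14 + (-6)*l^5*z^7*t^11*x^6 + 3*l^5*z^10*t^9*x^5)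 * hS
    have hne : x ^ 16 * z ^ 12 * t ^ 6 ≠ 0 := by
      exact mul_ne_zero (mul_ne_zero (pow_ne_zero _ hx) (pow_ne_zero _ hz)) (pow_ne_zero _ ht)
    have := (mul_eq_zero.mp key).resolve_left hne
    linear_combination this
  · intro hD
    have hfac : (μ * l ^ 3 - l ^ 2 - 18 * μ * l + 27 * μ ^ 2 + 16) *
        (μ * l ^ 3 - l ^ 2 + 18 * μ * l + 27 * μ ^ 2 - 16) = 0 := by
      linear_combination -hD
    have h20 : (2 : ℕ) ≠ 0 := by norm_num
    rcases mul_eq_zero.mp hfac with hra | hrb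
    · obtain ⟨t, hq, hc⟩ : ∃ t : k, 3 * t ^ 2 + l * t + 1 = 0 ∧ t ^ 3 - t - μ = 0 := by
        by_cases hl : l ^ 2 - 12 = 0
        · have h9 : (l - 9 * μ) ^ 2 = 0 := by
            linear_combination 3 * hra + (4 - 3 * μ * l) * hl
          have h9' : l = 9 * μ := by
            have := pow_eq_zero_iff h20 |>.mp h9
            linear_combination this
          exact ⟨-l/6, by linear_combination (-1/12 : k) * hl,
            by linear_combination (-l/216) * hl + (1/9 : k) * h9'⟩
        · refine ⟨(9 * μ - l)/(l ^ 2 - 12), ?_, ?_⟩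
          · field_simp
            linear_combination (9 : k) * hra
          · field_simp
            linear_combination (-l^3 + 9*l + 27*μ) * hra
      have hq0 : ![(1 : k), t, 1, t] ≠ 0 := by
        intro hc0
        have he := congrFun hc0 0
        simp at he
      refine stmt9_aux μ l ![1, t, 1, t] hq0 ?_ ?_ ?_ ?_ <;>
        simp [pderiv_mul, pderiv_pow, pderiv_X, pderiv_C, Pi.single_apply]
      · linear_combination t * hq - 2 * hc
      · linear_combination hq
      · linear_combination t * hq - 2 * hc
      · linear_combination hq
    · obtain ⟨t, hq, hc⟩ : ∃ t : k, 3 * t ^ 2 + l * t - 1 = 0 ∧ t ^ 3 + t - μ = 0 := by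
        by_cases hl : l ^ 2 + 12 = 0
        · have h9 : (l + 9 * μ) ^ 2 = 0 := by
            linear_combination 3 * hrb + (4 - 3 * μ * l) * hl
          have h9' : l = -9 * μ := by
            have := pow_eq_zero_iff h20 |>.mp h9
            linear_combination this
          exact ⟨-l/6, by linear_combination (-1/12 : k) * hl,
            by linear_combination (-l/216) * hl + (-1/9 : k) * h9'⟩
        · refine ⟨(l + 9 * μ)/(l ^ 2 + 12), ?_, ?_⟩
          · field_simp
            linear_combination (9 : k) * hrb
          · field_simp
            linear_combination (-l^3 - 9*l + 27*μ) * hrb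
      have hq0 : ![(1 : k), -t, -1, t] ≠ 0 := by
        intro hc0
        have he := congrFun hc0 0
        simp at he
      refine stmt9_aux μ l ![1, -t, -1, t] hq0 ?_ ?_ ?_ ?_ <;>
        simp [pderiv_mul, pderiv_pow, pderiv_X, pderiv_C, Pi.single_apply]
      · linear_combination t * hq - 2 * hc
      · linear_combination -hq
      · linear_combination -t * hq + 2 * hc
      · linear_combination hq
end

section
/- The quartic form g^λ = x³y + y³z + z³x + t⁴ + λ xyzt over an algebraically closed field k of characteristic zero is singular if and only if (λ/4)⁴ = 1, i.e., λ⁴ = 256. -/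
/-!
At a singular point `(x, y, z, t)`, the relations `x ∂ₓg = y ∂_y g = z ∂_z g = 0` form a circulant
linear system (determinant `28`) in the monomials `x³y, y³z, z³x`, and together with `t ∂ₜg = 0`
they give `4x³y = 4y³z = 4z³x = 4t⁴ = -λxyzt`. A vanishing coordinate forces the whole point to
vanish, so `xyzt ≠ 0`, and multiplying the four relations yields `256 (xyzt)⁴ = λ⁴ (xyzt)⁴`.
Conversely, for `λ⁴ = 256` the point `(1, 1, 1, -4/λ)` is singular.
-/

open MvPolynomial

noncomputable def quarticPencil {k : Type*} [Field k] (l : k) : MvPolynomial (Fin 4) k :=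
  X 0 ^ 3 * X 1 + X 1 ^ 3 * X 2 + X 2 ^ 3 * X 0 + X 3 ^ 4 + C l * (X 0 * X 1 * X 2 * X 3)

namespace quarticPencil

variable {k : Type*} [Field k]

structure IsCritical (l x y z t : k) : Prop where
  dx : 3 * x ^ 2 * y + z ^ 3 + l * y * z * t = 0
  dy : x ^ 3 + 3 * y ^ 2 * z + l * x * z * t = 0
  dz : y ^ 3 + 3 * z ^ 2 * x + l * x * y * t = 0
  dt : 4 * t ^ 3 + l * x * y * z = 0

theorem forall_eval_pderiv_eq_zero_iff (l : k) (p : Fin 4 → k) :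
    (∀ i, eval p (pderiv i (quarticPencil l)) = 0) ↔ IsCritical l (p 0) (p 1) (p 2) (p 3) := by
  simp only [Fin.forall_fin_succ, IsEmpty.forall_iff, and_true]
  simp only [Fin.isValue, quarticPencil, map_add, Derivation.leibniz, pderiv_X, ne_eq, one_ne_zero,
    not_false_eq_true, Pi.single_eq_of_ne, smul_eq_mul, mul_zero, Derivation.leibniz_pow,
    Nat.add_one_sub_one, Pi.single_eq_same, mul_one, nsmul_eq_mul, Nat.cast_ofNat, zero_add,
    Fin.reduceEq, add_zero, derivation_C, map_mul, eval_X, eval_ofNat, map_pow, eval_C,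
    Fin.succ_zero_eq_one, zero_ne_one, Fin.succ_one_eq_two, Fin.reduceSucc]
  constructor
  · rintro ⟨hx, hy, hz, ht⟩
    exact ⟨by linear_combination hx, by linear_combination hy, by linear_combination hz,
      by linear_combination ht⟩
  · rintro ⟨hx, hy, hz, ht⟩
    exact ⟨by linear_combination hx, by linear_combination hy, by linear_combination hz,
      by linear_combination ht⟩

variable {l x y z t : k}

theorem IsCritical.rotate (h : IsCritical l x y z t) : IsCritical l y z x t :=
  ⟨by linear_combination h.dy, by linear_combination h.dz, by linear_combination h.dx,
    by linear_combination h.dt⟩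

theorem four_ne_zero_of_two_ne_zero (h2 : (2 : k) ≠ 0) : (4 : k) ≠ 0 := by
  simpa [show (4 : k) = 2 * 2 by norm_num] using h2

theorem IsCritical.eq_zero_of_fst_eq_zero (h : IsCritical l x y z t) (h2 : (2 : k) ≠ 0)
    (hx : x = 0) : y = 0 ∧ z = 0 ∧ t = 0 := by
  subst hx
  have hy : y = 0 := pow_eq_zero_iff three_ne_zero |>.mp (by linear_combination h.dz)
  subst hy
  have hz : z = 0 := pow_eq_zero_iff three_ne_zero |>.mp (by linear_combination h.dx)
  subst hz
  have ht : 4 * t ^ 3 = 0 := by linear_combination h.dt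
  exact ⟨rfl, rfl, pow_eq_zero_iff three_ne_zero |>.mp
    ((mul_eq_zero.mp ht).resolve_left (four_ne_zero_of_two_ne_zero h2))⟩

theorem IsCritical.four_mul_monomials (h : IsCritical l x y z t) (h28 : (28 : k) ≠ 0) :
    4 * (x ^ 3 * y) = -(l * (x * y * z * t)) ∧ 4 * (y ^ 3 * z) = -(l * (x * y * z * t)) ∧
      4 * (z ^ 3 * x) = -(l * (x * y * z * t)) ∧ 4 * t ^ 4 = -(l * (x * y * z * t)) := by
  refine ⟨mul_left_cancel₀ h28 ?_, mul_left_cancel₀ h28 ?_, mul_left_cancel₀ h28 ?_, ?_⟩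
  · linear_combination 36 * x * h.dx + 4 * y * h.dy - 12 * z * h.dz
  · linear_combination 36 * y * h.dy + 4 * z * h.dz - 12 * x * h.dx
  · linear_combination 36 * z * h.dz + 4 * x * h.dx - 12 * y * h.dy
  · linear_combination t * h.dt

theorem IsCritical.pow_four_eq (h : IsCritical l x y z t) (hx : x ≠ 0) (h2 : (2 : k) ≠ 0)
    (h7 : (7 : k) ≠ 0) : l ^ 4 = 256 := by
  have h28 : (28 : k) ≠ 0 := by
    simpa [show (28 : k) = 2 * 2 * 7 by norm_num] using ⟨h2, h7⟩
  obtain ⟨ha, hb, hc, ht⟩ := h.four_mul_monomials h28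
  have hy : y ≠ 0 := fun hy => hx (h.rotate.eq_zero_of_fst_eq_zero h2 hy).2.1
  have hz : z ≠ 0 := fun hz => hx (h.rotate.rotate.eq_zero_of_fst_eq_zero h2 hz).1
  have ht0 : t ≠ 0 := by
    rintro rfl
    have hxy : 4 * (x ^ 3 * y) = 0 := by simpa using ha
    simp [four_ne_zero_of_two_ne_zero h2, hx, hy] at hxy
  have hm : (x * y * z * t) ^ 4 ≠ 0 := pow_ne_zero 4 (by simp [hx, hy, hz, ht0])
  refine mul_right_cancel₀ hm ?_
  calc l ^ 4 * (x * y * z * t) ^ 4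
      = (4 * (x ^ 3 * y)) * (4 * (y ^ 3 * z)) * (4 * (z ^ 3 * x)) * (4 * t ^ 4) := by
        rw [ha, hb, hc, ht]; ring
    _ = 256 * (x * y * z * t) ^ 4 := by ring

theorem isCritical_of_pow_four_eq (h2 : (2 : k) ≠ 0) (hl : l ^ 4 = 256) :
    IsCritical l 1 1 1 (-4 / l) := by
  have hl0 : l ≠ 0 := by
    rintro rfl
    exact pow_ne_zero 8 h2 (by linear_combination -hl)
  constructor <;> field_simp
  · ring
  · ring
  · ring
  · linear_combination hl

theorem isSingularForm_iff (h2 : (2 : k) ≠ 0) (h7 : (7 : k) ≠ 0) :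
    (quarticPencil l).IsSingularForm ↔ l ^ 4 = 256 := by
  simp only [IsSingularForm, forall_eval_pderiv_eq_zero_iff]
  constructor
  · rintro ⟨p, hp, h⟩
    refine h.pow_four_eq (fun hx => hp ?_) h2 h7
    obtain ⟨hy, hz, ht⟩ := h.eq_zero_of_fst_eq_zero h2 hx
    ext i
    fin_cases i <;> assumption
  · intro hl
    refine ⟨![1, 1, 1, -4 / l], ?_, isCritical_of_pow_four_eq h2 hl⟩
    simp [funext_iff, Fin.forall_fin_succ]

end quarticPencil

theorem stmt_13_general {k : Type*} [Field k] [CharZero k] (l : k) :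
    (X 0 ^ 3 * X 1 + X 1 ^ 3 * X 2 + X 2 ^ 3 * X 0 + X 3 ^ 4 +
        C l * (X 0 * X 1 * X 2 * X 3) : MvPolynomial (Fin 4) k).IsSingularForm ↔
      l ^ 4 = 256 :=
  quarticPencil.isSingularForm_iff two_ne_zero (by norm_num)

/-- the quartic form `g^λ = x³y + y³z + z³x + t⁴ + λxyzt` is singular iff
`(λ/4)⁴ = 1`, i.e. `λ⁴ = 256`. -/
theorem stmt_13 {k : Type*} [Field k] [IsAlgClosed k] [CharZero k] (l : k) :
    (X 0 ^ 3 * X 1 + X 1 ^ 3 * X 2 + X 2 ^ 3 * X 0 + X 3 ^ 4 +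
        C l * (X 0 * X 1 * X 2 * X 3) : MvPolynomial (Fin 4) k).IsSingularForm ↔
      l ^ 4 = 256 :=
  stmt_13_general l
end

section
/- The quartic form M^λ = x⁴ + y⁴ + z⁴ + t⁴ + λ xyzt over an algebraically closed field k of characteristic zero is singular if and only if λ⁴ = 4⁴ = 256. -/
/-!
Multiplying the `i`-th partial derivative of `M = ∑ xᵢ⁴ + λ xyzt` by `xᵢ` gives
`4 xᵢ⁴ + λ xyzt`. At a singular point `p` with `m = p₀p₁p₂p₃` this says `4 pᵢ⁴ = -λm` for every
`i`. If `m = 0` all coordinates vanish, which is excluded; otherwise multiplying the four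
equations gives `256 m⁴ = λ⁴ m⁴`. Conversely, at `(a, 1, 1, 1)` with `a ≠ 0` the conditions read
`4 = -λa` and `4a⁴ = -λa`, so `a = -4/λ` is a singular point as soon as `λ⁴ = 256`.
-/

open MvPolynomial

section

variable {k : Type*} [Field k]

/-- The Dwork pencil, with `λ = -4ψ` in its usual parametrisation `∑ xᵢ⁴ - 4ψ xyzt`. -/
noncomputable def dworkQuartic (l : k) : MvPolynomial (Fin 4) k :=
  X 0 ^ 4 + X 1 ^ 4 + X 2 ^ 4 + X 3 ^ 4 + C l * (X 0 * X 1 * X 2 * X 3)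

theorem X_mul_pderiv_dworkQuartic (l : k) (i : Fin 4) :
    X i * pderiv i (dworkQuartic l) = 4 * X i ^ 4 + C l * ∏ j, X j := by
  fin_cases i <;> simp [dworkQuartic, pderiv_X, Fin.prod_univ_four] <;> ring

theorem mul_eval_pderiv_dworkQuartic (l : k) (p : Fin 4 → k) (i : Fin 4) :
    p i * eval p (pderiv i (dworkQuartic l)) = 4 * p i ^ 4 + l * ∏ j, p j := by
  simpa using congrArg (eval p) (X_mul_pderiv_dworkQuartic l i)

theorem eval_pderiv_dworkQuartic_eq_zero_iff (l : k) {p : Fin 4 → k} {i : Fin 4}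
    (hpi : p i ≠ 0) :
    eval p (pderiv i (dworkQuartic l)) = 0 ↔ 4 * p i ^ 4 + l * ∏ j, p j = 0 := by
  rw [← mul_eval_pderiv_dworkQuartic, mul_eq_zero, or_iff_right hpi]

theorem pow_four_eq_of_isSingularForm_dworkQuartic (h4 : (4 : k) ≠ 0) {l : k}
    (h : (dworkQuartic l).IsSingularForm) : l ^ 4 = 256 := by
  obtain ⟨p, hp0, hp⟩ := h
  set m := ∏ j, p j
  have hcrit (i : Fin 4) : 4 * p i ^ 4 = -(l * m) := by
    linear_combination p i * hp i - mul_eval_pderiv_dworkQuartic l p i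
  have hm : m ≠ 0 := by
    intro hm
    exact hp0 <| funext fun i ↦ by simpa [hm, h4] using hcrit i
  have hprod : 256 * m ^ 4 = l ^ 4 * m ^ 4 := calc
    256 * m ^ 4 = ∏ i, 4 * p i ^ 4 := by
      simp only [m, Finset.prod_mul_distrib, Finset.prod_pow, Finset.prod_const,
        Finset.card_univ, Fintype.card_fin]
      norm_num
    _ = ∏ _i : Fin 4, -(l * m) := Finset.prod_congr rfl fun i _ ↦ hcrit i
    _ = l ^ 4 * m ^ 4 := by simp only [Finset.prod_const, Finset.card_univ, Fintype.card_fin]; ring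
  exact (mul_right_cancel₀ (pow_ne_zero 4 hm) hprod).symm

theorem isSingularForm_dworkQuartic (h4 : (4 : k) ≠ 0) {l : k} (hl : l ^ 4 = 256) :
    (dworkQuartic l).IsSingularForm := by
  have hl0 : l ≠ 0 := by
    rintro rfl
    exact pow_ne_zero 4 h4 (by linear_combination -hl)
  let p : Fin 4 → k := ![-4 / l, 1, 1, 1]
  have hp (i : Fin 4) : p i ≠ 0 := by
    fin_cases i <;> simp [p, hl0, h4]
  refine ⟨p, fun h ↦ hp 1 (congrFun h 1), fun i ↦ ?_⟩
  rw [eval_pderiv_dworkQuartic_eq_zero_iff l (hp i)]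
  fin_cases i
  · simp [p, Fin.prod_univ_four]
    field_simp
    linear_combination -4 * hl
  all_goals simp [p, Fin.prod_univ_four, mul_div_cancel₀ _ hl0]

theorem isSingularForm_dworkQuartic_iff (h4 : (4 : k) ≠ 0) (l : k) :
    (dworkQuartic l).IsSingularForm ↔ l ^ 4 = 256 :=
  ⟨pow_four_eq_of_isSingularForm_dworkQuartic h4, isSingularForm_dworkQuartic h4⟩

end

theorem stmt_15_general {k : Type*} [Field k] [CharZero k] (l : k) :
    (X 0 ^ 4 + X 1 ^ 4 + X 2 ^ 4 + X 3 ^ 4 +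
        C l * (X 0 * X 1 * X 2 * X 3) : MvPolynomial (Fin 4) k).IsSingularForm ↔
      l ^ 4 = 256 :=
  isSingularForm_dworkQuartic_iff (by norm_num) l

/-- the quartic form `M^λ = x⁴ + y⁴ + z⁴ + t⁴ + λxyzt` is singular iff
`λ⁴ = 4⁴ = 256`. -/
theorem stmt_15 {k : Type*} [Field k] [IsAlgClosed k] [CharZero k] (l : k) :
    (X 0 ^ 4 + X 1 ^ 4 + X 2 ^ 4 + X 3 ^ 4 +
        C l * (X 0 * X 1 * X 2 * X 3) : MvPolynomial (Fin 4) k).IsSingularForm ↔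
      l ^ 4 = 256 :=
  stmt_15_general l
end

section
/- Let a ≥ 1, p prime, q = p^a, ε ∈ k* with ord(ε) = q, d ≥ 3, and A_0 = diag[ε,1,1,1] ∈ GL_4(k). If f ∈ k[x,y,z,t] is a nonzero homogeneous form of degree d with f∘A_0^{-1} = ε^i f for some i, and q > d, then f is singular. -/
open MvPolynomial

/-- The linear substitution action of a matrix on polynomials:
`substM A f = f ∘ A`, i.e. `x_i ↦ ∑ j, A i j * x_j`; in the notation of the paper this is
`f_{A⁻¹}`. -/
noncomputable def substM {k : Type*} [CommSemiring k] (A : Matrix (Fin 4) (Fin 4) k)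
    (f : MvPolynomial (Fin 4) k) : MvPolynomial (Fin 4) k :=
  aeval (fun i => ∑ j : Fin 4, MvPolynomial.C (A i j) * X j) f

lemma my_aeval_eq_eval {k : Type*} [CommSemiring k] {σ : Type*} (x : σ → k)
    (h : MvPolynomial σ k) : aeval x h = eval x h := by
  rw [← coe_aeval_eq_eval]; rfl

-- units are constants
lemma my_eq_C_of_isUnit {k : Type*} [Field k] [Infinite k] {n : ℕ}
    {h : MvPolynomial (Fin n) k} (hu : IsUnit h) :
    h = MvPolynomial.C (constantCoeff h) := by
  apply MvPolynomial.funext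
  intro x
  rw [eval_C]
  have key : ∀ t : k, Polynomial.eval t
      (aeval (fun j => Polynomial.C (x j) * Polynomial.X) h) = eval (fun j => x j * t) h := by
    intro t
    have hcomp : (Polynomial.aeval t).comp
        (aeval (R := k) (fun j : Fin n => Polynomial.C (x j) * Polynomial.X)) =
        aeval (fun j => x j * t) := by
      apply MvPolynomial.algHom_ext
      intro j
      simp
    have h2 := DFunLike.congr_fun hcomp h
    simp only [AlgHom.coe_comp, Function.comp_apply, my_aeval_eq_eval] at h2
    rw [← h2, ← Polynomial.coe_aeval_eq_eval]
  obtain ⟨r, -, hr⟩ := Polynomial.isUnit_iff.mp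
    (hu.map (aeval (R := k) (fun j : Fin n => Polynomial.C (x j) * Polynomial.X)))
  have h1 := key 1
  have h0 := key 0
  rw [← hr] at h1 h0
  simp only [Polynomial.eval_C] at h1 h0
  have heq : eval (fun j => x j * 1) h = eval (fun j => x j * 0) h := h1.symm.trans h0
  simp only [mul_one, mul_zero] at heq
  rw [heq]
  rw [show (fun _ : Fin n => (0:k)) = (0 : Fin n → k) from rfl, ← my_aeval_eq_eval,
    MvPolynomial.aeval_zero]
  rfl

lemma my_exists_eval_zero {k : Type*} [Field k] [IsAlgClosed k] {n : ℕ}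
    (h : MvPolynomial (Fin n) k) (hu : ¬ IsUnit h) : ∃ x : Fin n → k, eval x h = 0 := by
  have hspan : Ideal.span {h} ≠ ⊤ := fun ht => hu (Ideal.span_singleton_eq_top.mp ht)
  obtain ⟨M, hM, hle⟩ := Ideal.exists_le_maximal _ hspan
  obtain ⟨x, rfl⟩ := (MvPolynomial.isMaximal_iff_eq_vanishingIdeal_singleton (I := M)).mp hM
  exact ⟨x, (MvPolynomial.mem_vanishingIdeal_singleton_iff x h).mp
    (hle (Ideal.subset_span rfl))⟩

-- E1/E2 : vanishing of eval of pderiv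
lemma my_eval_pderiv_zero {k : Type*} [CommRing k] (p : Fin 4 → k) (j : Fin 4)
    (f : MvPolynomial (Fin 4) k)
    (H : ∀ m ∈ f.support, m j ≠ 0 → ∃ l, (m - Finsupp.single j 1 : Fin 4 →₀ ℕ) l ≠ 0 ∧ p l = 0) :
    eval p (pderiv j f) = 0 := by
  conv_lhs => rw [f.as_sum]
  rw [map_sum, map_sum]
  apply Finset.sum_eq_zero
  intro m hm
  rw [pderiv_monomial]
  by_cases hmj : m j = 0
  · simp [hmj]
  · obtain ⟨l, hl, hpl⟩ := H m hm hmj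
    rw [eval_monomial]
    apply mul_eq_zero_of_right
    exact Finset.prod_eq_zero (Finsupp.mem_support_iff.mpr hl) (by simp only []; rw [hpl]; exact zero_pow hl)

lemma my_eval_pderiv0 {k : Type*} [CommRing k] (f : MvPolynomial (Fin 4) k)
    (hm0 : ∀ m ∈ f.support, m 0 = 1) (u p : Fin 4 → k)
    (hu0 : u 0 = 1) (hp : ∀ l : Fin 4, l ≠ 0 → p l = u l) :
    eval p (pderiv 0 f) = eval u f := by
  conv_lhs => rw [f.as_sum]
  conv_rhs => rw [f.as_sum]
  rw [map_sum, map_sum, map_sum]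
  apply Finset.sum_congr rfl
  intro m hm
  rw [pderiv_monomial, eval_monomial, eval_monomial]
  rw [Finsupp.prod_fintype _ _ (fun _ => pow_zero _),
    Finsupp.prod_fintype _ _ (fun _ => pow_zero _)]
  have h0 : m 0 = 1 := hm0 m hm
  rw [Fin.prod_univ_four, Fin.prod_univ_four]
  have e0 : (m - Finsupp.single 0 1 : Fin 4 →₀ ℕ) 0 = 0 := by
    rw [Finsupp.tsub_apply, h0]; simp
  have e1 : ∀ l : Fin 4, l ≠ 0 → (m - Finsupp.single 0 1 : Fin 4 →₀ ℕ) l = m l := by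
    intro l hl
    rw [Finsupp.tsub_apply, Finsupp.single_apply, if_neg (fun h => hl h.symm)]
    simp
  rw [e0, e1 1 (by decide), e1 2 (by decide), e1 3 (by decide), hp 1 (by decide),
    hp 2 (by decide), hp 3 (by decide), h0, hu0]
  simp

lemma my_aeval_scale_monomial {k : Type*} [CommRing k] (c : Fin 4 → k) (m : Fin 4 →₀ ℕ) (r : k) :
    aeval (fun j => C (c j) * X j) (monomial m r) = monomial m ((∏ j, c j ^ m j) * r) := by
  rw [aeval_monomial, monomial_eq]
  rw [Finsupp.prod_fintype _ _ (fun _ => pow_zero _),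
    Finsupp.prod_fintype _ _ (fun _ => pow_zero _)]
  simp only [mul_pow, algebraMap_eq, map_mul, map_prod, map_pow]
  rw [Finset.prod_mul_distrib]
  ring

lemma my_coeff_substM_diagonal {k : Type*} [CommRing k] (c : Fin 4 → k)
    (f : MvPolynomial (Fin 4) k) (m : Fin 4 →₀ ℕ) :
    coeff m (substM (Matrix.diagonal c) f) = (∏ j, c j ^ m j) * coeff m f := by
  have hv : (fun i : Fin 4 => ∑ j : Fin 4, C (Matrix.diagonal c i j) * X j) =
      fun i : Fin 4 => (C (c i) * X i : MvPolynomial (Fin 4) k) := by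
    funext i
    rw [Finset.sum_eq_single i (fun b _ hb => by
      rw [Matrix.diagonal_apply_ne c (Ne.symm hb)]; simp) (by simp)]
    rw [Matrix.diagonal_apply_eq]
  rw [substM, hv]
  conv_lhs => rw [f.as_sum]
  rw [map_sum, coeff_sum]
  simp_rw [my_aeval_scale_monomial, coeff_monomial]
  by_cases hm : m ∈ f.support
  · rw [Finset.sum_eq_single_of_mem m hm (fun b _ hb => if_neg hb), if_pos rfl]
  · rw [Finset.sum_eq_zero (fun b hb => if_neg (fun h : b = m => hm (h ▸ hb))),
      notMem_support_iff.mp hm, mul_zero]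

noncomputable def myμ (m : Fin 4 →₀ ℕ) : Fin 2 →₀ ℕ := Finsupp.single 0 (m 1) + Finsupp.single 1 (m 2)

lemma myμ_apply0 (m : Fin 4 →₀ ℕ) : myμ m 0 = m 1 := by simp [myμ, Finsupp.single_apply]
lemma myμ_apply1 (m : Fin 4 →₀ ℕ) : myμ m 1 = m 2 := by simp [myμ, Finsupp.single_apply]

lemma my_aeval_v_monomial {k : Type*} [CommRing k] (m : Fin 4 →₀ ℕ) (r : k) :
    aeval (![1, X 0, X 1, 1] : Fin 4 → MvPolynomial (Fin 2) k) (monomial m r) =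
      monomial (myμ m) r := by
  rw [aeval_monomial, monomial_eq]
  rw [Finsupp.prod_fintype _ _ (fun _ => pow_zero _),
    Finsupp.prod_fintype _ _ (fun _ => pow_zero _)]
  rw [Fin.prod_univ_four, Fin.prod_univ_two, myμ_apply0, myμ_apply1]
  simp only [Matrix.cons_val_zero, Matrix.cons_val_one, Matrix.head_cons,
    Matrix.cons_val_two, Matrix.cons_val_three, Matrix.tail_cons, one_pow, algebraMap_eq]
  ring

/-- let `q = p^a ≥ p` be a prime power, `ε` of order `q`, `d ≥ 3` with `q > d`,
and `A₀ = diag[ε,1,1,1]`. If `f` is a nonzero degree-`d` form with `f_{A₀⁻¹} = εⁱ f` for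
some `i`, then `f` is singular. -/
theorem stmt_18 {k : Type*} [Field k] [IsAlgClosed k] [CharZero k]
    (a p q : ℕ) (ha : 1 ≤ a) (hp : p.Prime) (hq : q = p ^ a) (ε : kˣ)
    (hε : orderOf ε = q) (d : ℕ) (hd : 3 ≤ d) (hqd : q > d)
    (f : MvPolynomial (Fin 4) k) (hf : f ≠ 0) (hhom : f.IsHomogeneous d)
    (hinv : ∃ i : ℕ, substM (Matrix.diagonal ![(ε : k), 1, 1, 1]) f = (ε : k) ^ i • f) :
    f.IsSingularForm := by
  obtain ⟨i, hinv⟩ := hinv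
  have hdeg : ∀ m ∈ f.support, m 0 + m 1 + m 2 + m 3 = d := by
    intro m hm
    have hw : (Finsupp.weight 1) m = d := hhom (mem_support_iff.mp hm)
    have hdm : Finsupp.degree m = d := by rw [Finsupp.degree_eq_weight_one]; exact_mod_cast hw
    have hsum : Finsupp.degree m = ∑ l : Fin 4, m l :=
      Finset.sum_subset (Finset.subset_univ _)
        (fun x _ hx => Finsupp.notMem_support_iff.mp hx)
    rw [hsum, Fin.sum_univ_four] at hdm
    exact hdm
  set e := i % q with hei
  have hsup0 : ∀ m ∈ f.support, m 0 = e := by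
    intro m hm
    have hc : coeff m f ≠ 0 := mem_support_iff.mp hm
    have h1 := congrArg (coeff m) hinv
    rw [my_coeff_substM_diagonal, coeff_smul, smul_eq_mul, Fin.prod_univ_four] at h1
    simp only [Matrix.cons_val_zero, Matrix.cons_val_one, Matrix.head_cons,
      Matrix.cons_val_two, Matrix.cons_val_three, Matrix.tail_cons, one_pow, mul_one] at h1
    have h2 : (ε : k) ^ (m 0) = (ε : k) ^ i := mul_right_cancel₀ hc h1
    have h3 : ε ^ (m 0) = ε ^ i := Units.ext (by push_cast; exact h2)
    have h4 : m 0 ≡ i [MOD q] := by rw [← hε]; exact pow_eq_pow_iff_modEq.mp h3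
    have h5 : m 0 ≤ d := by have := hdeg m hm; omega
    have h6 : m 0 % q = i % q := h4
    rwa [Nat.mod_eq_of_lt (lt_of_le_of_lt h5 hqd)] at h6
  by_cases he0 : e = 0
  · -- cone case : singular at (1,0,0,0)
    refine ⟨![1, 0, 0, 0], ?_, ?_⟩
    · intro hcontr; have := congrFun hcontr 0; simp at this
    · intro j
      apply my_eval_pderiv_zero
      intro m hm hmj
      have h0 : m 0 = 0 := (hsup0 m hm).trans he0
      have hj : j ≠ 0 := fun h => hmj (h ▸ h0)
      by_contra hno
      push_neg at hno
      have hml : ∀ l : Fin 4, (m - Finsupp.single j 1 : Fin 4 →₀ ℕ) l = 0 := by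
        intro l
        by_cases hl0 : l = 0
        · subst hl0; rw [Finsupp.tsub_apply, h0]; simp
        · by_contra h'
          refine (hno l h') ?_
          fin_cases l
          · exact absurd rfl hl0
          · simp
          · simp
          · simp
      have hle : ∀ l : Fin 4, m l ≤ Finsupp.single j 1 l := by
        intro l; have := hml l; rw [Finsupp.tsub_apply] at this; omega
      have hsum := hdeg m hm
      have h1 := hle 0; have h2 := hle 1; have h3 := hle 2; have h4 := hle 3
      have s1 : Finsupp.single j 1 0 + Finsupp.single j 1 1 + Finsupp.single j 1 2
          + Finsupp.single j 1 3 = 1 := by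
        fin_cases j <;> simp [Finsupp.single_apply]
      omega
  · by_cases he1 : e = 1
    · -- f = x * g
      set h2 : MvPolynomial (Fin 2) k :=
        aeval (![1, X 0, X 1, 1] : Fin 4 → MvPolynomial (Fin 2) k) f with hh2
      have hcoeff : ∀ m ∈ f.support, coeff (myμ m) h2 = coeff m f := by
        intro m₁ hm₁
        rw [hh2]
        conv_lhs => rw [f.as_sum]
        rw [map_sum, coeff_sum]
        simp_rw [my_aeval_v_monomial, coeff_monomial]
        rw [Finset.sum_eq_single_of_mem m₁ hm₁ ?_, if_pos rfl]
        intro b hb hbne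
        rw [if_neg]
        intro hμ
        apply hbne
        have hb0 : b 0 = 1 := (hsup0 b hb).trans he1
        have hc0 : m₁ 0 = 1 := (hsup0 m₁ hm₁).trans he1
        have hb1 : b 1 = m₁ 1 := by
          have := DFunLike.congr_fun hμ 0; rwa [myμ_apply0, myμ_apply0] at this
        have hb2 : b 2 = m₁ 2 := by
          have := DFunLike.congr_fun hμ 1; rwa [myμ_apply1, myμ_apply1] at this
        have hdb := hdeg b hb
        have hdm := hdeg m₁ hm₁
        have hb3 : b 3 = m₁ 3 := by omega
        ext l
        fin_cases l
        · exact hb0.trans hc0.symm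
        · exact hb1
        · exact hb2
        · exact hb3
      by_cases hall : ∀ m ∈ f.support, m 1 = 0 ∧ m 2 = 0
      · refine ⟨![0, 1, 0, 0], ?_, ?_⟩
        · intro hcontr; have := congrFun hcontr 1; simp at this
        · intro j
          apply my_eval_pderiv_zero
          intro m hm hmj
          obtain ⟨hm1, hm2⟩ := hall m hm
          have hm0 : m 0 = 1 := (hsup0 m hm).trans he1
          have hm3d := hdeg m hm
          by_cases hj1 : j = 1
          · subst hj1; exact absurd hm1 hmj
          by_cases hj2 : j = 2
          · subst hj2; exact absurd hm2 hmj
          by_cases hj0 : j = 0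
          · subst hj0
            refine ⟨3, ?_, by simp⟩
            rw [Finsupp.tsub_apply]
            have hs : Finsupp.single (0 : Fin 4) 1 3 = 0 := by
              simp [Finsupp.single_apply]
            omega
          · refine ⟨0, ?_, by simp⟩
            rw [Finsupp.tsub_apply]
            have hs : Finsupp.single j 1 0 = 0 := by
              rw [Finsupp.single_apply, if_neg (fun h => hj0 h)]
            omega
      · push_neg at hall
        obtain ⟨m₀, hm₀, hne⟩ := hall
        have hμne : myμ m₀ ≠ 0 := by
          intro hz
          have hz1 : m₀ 1 = 0 := by
            have := DFunLike.congr_fun hz 0; rwa [myμ_apply0] at this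
          have hz2 : m₀ 2 = 0 := by
            have := DFunLike.congr_fun hz 1; rwa [myμ_apply1] at this
          exact hne hz1 hz2
        have hnu : ¬ IsUnit h2 := by
          intro hu
          have hC := my_eq_C_of_isUnit hu
          have hcm := hcoeff m₀ hm₀
          rw [hC, coeff_C, if_neg (fun hccc => hμne hccc.symm)] at hcm
          exact (mem_support_iff.mp hm₀) hcm.symm
        obtain ⟨x, hx⟩ := my_exists_eval_zero h2 hnu
        refine ⟨![0, x 0, x 1, 1], ?_, ?_⟩
        · intro hcontr; have := congrFun hcontr 3; simp at this
        · intro j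
          by_cases hj0 : j = 0
          · subst hj0
            have heval : eval ![0, x 0, x 1, 1] (pderiv 0 f) = eval ![1, x 0, x 1, 1] f := by
              apply my_eval_pderiv0 f (fun m hm => (hsup0 m hm).trans he1) _ _ (by simp)
              intro l hl
              fin_cases l
              · exact absurd rfl hl
              all_goals simp
            rw [heval]
            have hcomp : (aeval x).comp
                (aeval (![1, X 0, X 1, 1] : Fin 4 → MvPolynomial (Fin 2) k)) =
                aeval (![1, x 0, x 1, 1] : Fin 4 → k) := by
              apply algHom_ext
              intro j
              fin_cases j <;> simp
            have hcf := DFunLike.congr_fun hcomp f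
            simp only [AlgHom.coe_comp, Function.comp_apply, my_aeval_eq_eval] at hcf
            rw [← hcf, ← hh2, hx]
          · apply my_eval_pderiv_zero
            intro m hm hmj
            refine ⟨0, ?_, by simp⟩
            rw [Finsupp.tsub_apply]
            have h0 : m 0 = 1 := (hsup0 m hm).trans he1
            have hs : Finsupp.single j 1 0 = 0 := by
              rw [Finsupp.single_apply, if_neg (fun h => hj0 h)]
            omega
    · -- e ≥ 2
      have he2 : 2 ≤ e := by omega
      refine ⟨![0, 1, 0, 0], ?_, ?_⟩
      · intro hcontr; have := congrFun hcontr 1; simp at this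
      · intro j
        apply my_eval_pderiv_zero
        intro m hm hmj
        refine ⟨0, ?_, by simp⟩
        rw [Finsupp.tsub_apply]
        have h0 : m 0 = e := hsup0 m hm
        have hs : Finsupp.single j 1 0 ≤ 1 := by
          rw [Finsupp.single_apply]; split <;> omega
        omega
end
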